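/- Let p = 2 and let (f_m)_{m∈ℕ} be a Bessel sequence in the Hilbert space L²(I), i.e., there exists B > 0 such that ∑_m |⟨g, f_m⟩|² ≤ B‖g‖₂² for all g ∈ L²(I). Then (f_m *_T 0)_{m∈ℕ} is also a Bessel sequence in L²(I): there exists B' > 0 such that ∑_m |⟨f, f_m *_T 0⟩|² ≤ B'‖f‖₂² for all f ∈ L²(I). -/

import Mathlib

open MeasureTheory ENNReal

noncomputable section

/-- The inverse of the increasing affine map `L n` sending `[x 0, x N]` onto
`[x n, x (n+1)]` (so `L n (x 0) = x n.castSucc` and `L n (x N) = x n.succ`). -/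
def Linv {N : ℕ} (x : Fin (N + 1) → ℝ) (n : Fin N) (y : ℝ) : ℝ :=
  x 0 + (y - x n.castSucc) * (x (Fin.last N) - x 0) / (x n.succ - x n.castSucc)

/-- The subinterval `I n` of the partition: `[x 0, x 1]` for `n = 0` and
`(x n, x (n+1)]` otherwise. -/
def subInt {N : ℕ} (x : Fin (N + 1) → ℝ) (n : Fin N) : Set ℝ :=
  if n.val = 0 then Set.Icc (x n.castSucc) (x n.succ)
  else Set.Ioc (x n.castSucc) (x n.succ)

/-- `h` is the image of `g` under the Read–Bajraktarević operator `T_{f,b}` with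
scale functions `α`, almost everywhere: on each `I n`,
`h = f + (α n ∘ Lₙ⁻¹) · ((g - b) ∘ Lₙ⁻¹)`. -/
def RBEq {N : ℕ} (μ : Measure ℝ) (x : Fin (N + 1) → ℝ) (α : Fin N → ℝ → ℝ)
    (f b g h : ℝ → ℝ) : Prop :=
  ∀ n : Fin N, ∀ᵐ t ∂μ, t ∈ subInt x n →
    h t = f t + α n (Linv x n t) * (g (Linv x n t) - b (Linv x n t))

/-- `h` satisfies the self-referential equation of `T_{f,b}`, i.e. `h` is a fixed
point of `T_{f,b}`; `h` is then the fractal convolution `f *_T b`. -/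
def SelfRef {N : ℕ} (μ : Measure ℝ) (x : Fin (N + 1) → ℝ) (α : Fin N → ℝ → ℝ)
    (f b h : ℝ → ℝ) : Prop :=
  RBEq μ x α f b h h

/-! With `S g := ∑ₙ 𝟙_{Iₙ} · (αₙ ∘ Lₙ⁻¹) · (g ∘ Lₙ⁻¹)`, the self-referential equation of
`f *_T 0` reads `h = f + S h`. The map `Lₙ⁻¹` pushes Lebesgue measure on `Iₙ` forward to `aₙ`
times Lebesgue measure on `I`, and `∑ₙ aₙ = 1`, so `S` is a bounded operator on `L²(I)` with
`‖S‖ ≤ Λ < 1`. Hence `f *_T 0 = (1 - S)⁻¹ f` with `‖(1 - S)⁻¹‖ ≤ (1 - ‖S‖)⁻¹`, and passing to the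
adjoint, `⟨g, (1 - S)⁻¹ fₘ⟩ = ⟨((1 - S)⁻¹)* g, fₘ⟩`, transfers the Bessel bound with
`B' = B (1 - ‖S‖)⁻²`. -/

open scoped NNReal
open Function Set

section FixedPoint

variable {𝕜 E : Type*} [NontriviallyNormedField 𝕜] [NormedAddCommGroup E] [NormedSpace 𝕜 E]
  {S : E →L[𝕜] E}

lemma norm_le_of_eq_add_apply (hS : ‖S‖ < 1) {f h : E} (hfix : h = f + S h) :
    ‖h‖ ≤ (1 - ‖S‖)⁻¹ * ‖f‖ := by
  have : ‖h‖ ≤ ‖f‖ + ‖S‖ * ‖h‖ := calc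
    ‖h‖ = ‖f + S h‖ := congrArg _ hfix
    _ ≤ ‖f‖ + ‖S‖ * ‖h‖ := (norm_add_le _ _).trans (add_le_add_right (S.le_opNorm h) _)
  rw [inv_mul_eq_div, le_div_iff₀ (sub_pos.2 hS)]
  linarith

variable [CompleteSpace E]

lemma inverse_one_sub_apply_eq_add_apply (hS : ‖S‖ < 1) (f : E) :
    Ring.inverse (1 - S) f = f + S (Ring.inverse (1 - S) f) := by
  have : (1 - S) (Ring.inverse (1 - S) f) = f := by
    rw [NormedRing.inverse_one_sub S hS, ← mul_apply_eq_comp, ← Units.val_oneSub S hS,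
      Units.mul_inv, one_apply_eq_self]
  rwa [sub_apply, one_apply_eq_self, sub_eq_iff_eq_add] at this

lemma eq_inverse_one_sub_apply_of_eq_add_apply (hS : ‖S‖ < 1) {f h : E}
    (hfix : h = f + S h) : h = Ring.inverse (1 - S) f := by
  set h₀ := Ring.inverse (1 - S) f
  have hh₀ : h₀ = f + S h₀ := inverse_one_sub_apply_eq_add_apply hS f
  have hdiff : h - h₀ = 0 + S (h - h₀) := calc
    h - h₀ = (f + S h) - (f + S h₀) := by rw [← hfix, ← hh₀]
    _ = 0 + S (h - h₀) := by rw [map_sub]; abel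
  have := norm_le_of_eq_add_apply hS hdiff
  rw [norm_zero, mul_zero] at this
  exact sub_eq_zero.1 (norm_le_zero_iff.1 this)

lemma norm_inverse_one_sub_le (hS : ‖S‖ < 1) : ‖Ring.inverse (1 - S)‖ ≤ (1 - ‖S‖)⁻¹ :=
  (Ring.inverse (1 - S)).opNorm_le_bound (inv_nonneg.2 (sub_pos.2 hS).le) fun f =>
    norm_le_of_eq_add_apply hS (inverse_one_sub_apply_eq_add_apply hS f)

end FixedPoint

section Bessel

variable {𝕜 E ι : Type*} [RCLike 𝕜] [NormedAddCommGroup E] [InnerProductSpace 𝕜 E]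
  [CompleteSpace E]

lemma sum_norm_inner_map_sq_le (T : E →L[𝕜] E) {f : ι → E} {B : ℝ}
    (hf : ∀ g : E, ∀ s : Finset ι, ∑ m ∈ s, ‖inner 𝕜 g (f m)‖ ^ 2 ≤ B * ‖g‖ ^ 2)
    (hB : 0 ≤ B) (g : E) (s : Finset ι) :
    ∑ m ∈ s, ‖inner 𝕜 g (T (f m))‖ ^ 2 ≤ B * ‖T‖ ^ 2 * ‖g‖ ^ 2 := calc
  ∑ m ∈ s, ‖inner 𝕜 g (T (f m))‖ ^ 2 = ∑ m ∈ s, ‖inner 𝕜 (T.adjoint g) (f m)‖ ^ 2 := by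
    simp only [ContinuousLinearMap.adjoint_inner_left]
  _ ≤ B * ‖T.adjoint g‖ ^ 2 := hf _ s
  _ ≤ B * (‖T‖ * ‖g‖) ^ 2 := by
    gcongr
    simpa only [ContinuousLinearMap.adjoint.norm_map] using T.adjoint.le_opNorm g
  _ = B * ‖T‖ ^ 2 * ‖g‖ ^ 2 := by ring

lemma sum_norm_inner_sq_le_of_eq_add_apply {S : E →L[𝕜] E} (hS : ‖S‖ < 1) {P : E → E}
    (hP : ∀ f, P f = f + S (P f)) {f : ι → E} {B : ℝ}
    (hf : ∀ g : E, ∀ s : Finset ι, ∑ m ∈ s, ‖inner 𝕜 g (f m)‖ ^ 2 ≤ B * ‖g‖ ^ 2)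
    (hB : 0 ≤ B) (g : E) (s : Finset ι) :
    ∑ m ∈ s, ‖inner 𝕜 g (P (f m))‖ ^ 2 ≤ B * (1 - ‖S‖)⁻¹ ^ 2 * ‖g‖ ^ 2 := calc
  ∑ m ∈ s, ‖inner 𝕜 g (P (f m))‖ ^ 2 = ∑ m ∈ s, ‖inner 𝕜 g (Ring.inverse (1 - S) (f m))‖ ^ 2 := by
    simp only [← eq_inverse_one_sub_apply_of_eq_add_apply hS (hP _)]
  _ ≤ B * ‖Ring.inverse (1 - S)‖ ^ 2 * ‖g‖ ^ 2 := sum_norm_inner_map_sq_le _ hf hB g s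
  _ ≤ B * (1 - ‖S‖)⁻¹ ^ 2 * ‖g‖ ^ 2 := by gcongr; exact norm_inverse_one_sub_le hS

end Bessel

section LpLift

variable {α 𝕜 E : Type*} [MeasurableSpace α] {μ : Measure α} [NontriviallyNormedField 𝕜]
  [NormedAddCommGroup E] [NormedSpace 𝕜 E] {p : ℝ≥0∞} [Fact (1 ≤ p)]

lemma LinearMap.exists_Lp_continuousLinearMap (F : (α → E) →ₗ[𝕜] α → E) (C : ℝ≥0)
    (hF_meas : ∀ g, AEStronglyMeasurable g μ → AEStronglyMeasurable (F g) μ)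
    (hF_congr : ∀ g g', g =ᵐ[μ] g' → F g =ᵐ[μ] F g')
    (hF_le : ∀ g, AEStronglyMeasurable g μ → eLpNorm (F g) p μ ≤ C * eLpNorm g p μ) :
    ∃ S : Lp E p μ →L[𝕜] Lp E p μ, ‖S‖ ≤ C ∧ ∀ g, S g =ᵐ[μ] F g := by
  have hmem (g : Lp E p μ) : MemLp (F g) p μ :=
    ⟨hF_meas _ (Lp.aestronglyMeasurable g),
      (hF_le _ (Lp.aestronglyMeasurable g)).trans_lt (mul_lt_top coe_lt_top (Lp.eLpNorm_lt_top g))⟩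
  let S : Lp E p μ →ₗ[𝕜] Lp E p μ :=
    { toFun g := (hmem g).toLp (F g)
      map_add' g₁ g₂ := by
        rw [← MemLp.toLp_add]
        exact MemLp.toLp_congr _ _ ((hF_congr _ _ (Lp.coeFn_add g₁ g₂)).trans (by rw [map_add]))
      map_smul' c g := by
        rw [RingHom.id_apply, ← MemLp.toLp_const_smul]
        exact MemLp.toLp_congr _ _ ((hF_congr _ _ (Lp.coeFn_smul c g)).trans (by rw [map_smul])) }
  have hS (g : Lp E p μ) : ‖S g‖ ≤ C * ‖g‖ := by
    change ‖(hmem g).toLp (F g)‖ ≤ C * ‖g‖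
    rw [Lp.norm_toLp, Lp.norm_def, ← coe_toReal, ← toReal_mul]
    exact toReal_mono (mul_ne_top coe_ne_top (Lp.eLpNorm_ne_top g))
      (hF_le _ (Lp.aestronglyMeasurable g))
  exact ⟨S.mkContinuous C hS, S.mkContinuous_norm_le C.2 hS, fun g => (hmem g).coeFn_toLp⟩

end LpLift

section WeightedCompSum

variable {α ι 𝕜 E : Type*} [Fintype ι] [NontriviallyNormedField 𝕜]
  [NormedAddCommGroup E] [NormedSpace 𝕜 E]

def weightedCompSum (A : ι → Set α) (w : ι → α → 𝕜) (φ : ι → α → α) : (α → E) →ₗ[𝕜] α → E where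
  toFun g t := ∑ n, (A n).indicator (fun s => w n s • g (φ n s)) t
  map_add' g₁ g₂ := by
    ext t; simp only [Pi.add_apply, smul_add, indicator_add, Finset.sum_add_distrib]
  map_smul' c g := by ext t; simp [smul_comm c, Finset.smul_sum, indicator_smul]

variable {A : ι → Set α} {w : ι → α → 𝕜} {φ : ι → α → α}

lemma weightedCompSum_apply (g : α → E) (t : α) :
    weightedCompSum A w φ g t = ∑ n, (A n).indicator (fun s => w n s • g (φ n s)) t := rfl

lemma weightedCompSum_apply_of_mem (hA : Pairwise (Disjoint on A)) (g : α → E) {n : ι} {t : α}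
    (ht : t ∈ A n) : weightedCompSum A w φ g t = w n t • g (φ n t) := by
  rw [weightedCompSum_apply, Finset.sum_eq_single n, indicator_of_mem ht]
  · exact fun m _ hmn => indicator_of_notMem ((hA hmn).notMem_of_mem_right ht) _
  · simp

lemma weightedCompSum_apply_of_notMem (g : α → E) {t : α} (ht : t ∉ ⋃ n, A n) :
    weightedCompSum A w φ g t = 0 := by
  simp only [mem_iUnion, not_exists] at ht
  simp [weightedCompSum_apply, indicator_of_notMem (ht _)]

variable [MeasurableSpace α] {μ : Measure α}

lemma weightedCompSum_congr_ae (hA : ∀ n, MeasurableSet (A n))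
    (hφ : ∀ n, Measure.QuasiMeasurePreserving (φ n) (μ.restrict (A n)) μ) {g g' : α → E}
    (hg : g =ᵐ[μ] g') : weightedCompSum A w φ g =ᵐ[μ] weightedCompSum A w φ g' := by
  have h (n : ι) : ∀ᵐ t ∂μ, t ∈ A n → g (φ n t) = g' (φ n t) :=
    (ae_restrict_iff' (hA n)).1 ((hφ n).ae_eq hg)
  filter_upwards [ae_all_iff.2 h] with t ht
  refine Finset.sum_congr rfl fun n _ => ?_
  by_cases htn : t ∈ A n
  · simp only [indicator_of_mem htn, ht n htn]
  · simp only [indicator_of_notMem htn]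

lemma aestronglyMeasurable_weightedCompSum (hA : ∀ n, MeasurableSet (A n))
    (hφ : ∀ n, Measure.QuasiMeasurePreserving (φ n) (μ.restrict (A n)) μ)
    (hw : ∀ n, AEStronglyMeasurable (w n) (μ.restrict (A n))) {g : α → E}
    (hg : AEStronglyMeasurable g μ) : AEStronglyMeasurable (weightedCompSum A w φ g) μ :=
  Finset.aestronglyMeasurable_fun_sum _ fun n _ => (aestronglyMeasurable_indicator_iff (hA n)).2
    ((hw n).smul (hg.comp_quasiMeasurePreserving (hφ n)))

lemma lintegral_enorm_rpow_weightedCompSum_le (hA : ∀ n, MeasurableSet (A n))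
    (hdisj : Pairwise (Disjoint on A)) {c : ι → ℝ≥0∞}
    (hmap : ∀ n, Measure.map (φ n) (μ.restrict (A n)) = c n • μ) (hc : ∑ n, c n ≤ 1)
    (hφ : ∀ n, AEMeasurable (φ n) (μ.restrict (A n))) {C : ℝ≥0}
    (hw : ∀ n, ∀ᵐ t ∂μ.restrict (A n), ‖w n t‖ₑ ≤ C) {g : α → E} (hg : AEStronglyMeasurable g μ)
    {q : ℝ} (hq : 0 < q) :
    ∫⁻ t, ‖weightedCompSum A w φ g t‖ₑ ^ q ∂μ ≤ (C : ℝ≥0∞) ^ q * ∫⁻ t, ‖g t‖ₑ ^ q ∂μ := by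
  have hpiece (n : ι) : ∫⁻ t in A n, ‖w n t • g (φ n t)‖ₑ ^ q ∂μ
      ≤ (C : ℝ≥0∞) ^ q * (c n * ∫⁻ t, ‖g t‖ₑ ^ q ∂μ) := calc
    ∫⁻ t in A n, ‖w n t • g (φ n t)‖ₑ ^ q ∂μ
        ≤ ∫⁻ t in A n, (C : ℝ≥0∞) ^ q * ‖g (φ n t)‖ₑ ^ q ∂μ := by
      refine lintegral_mono_ae ((hw n).mono fun t ht => ?_)
      rw [enorm_smul, mul_rpow_of_nonneg _ _ hq.le]
      gcongr
    _ = (C : ℝ≥0∞) ^ q * ∫⁻ y, ‖g y‖ₑ ^ q ∂(Measure.map (φ n) (μ.restrict (A n))) := by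
      have hgq : AEMeasurable (fun y => ‖g y‖ₑ ^ q) (Measure.map (φ n) (μ.restrict (A n))) := by
        rw [hmap n]; exact (hg.enorm.pow_const q).smul_measure _
      rw [lintegral_const_mul' _ _ (rpow_ne_top_of_nonneg hq.le coe_ne_top),
        lintegral_map' hgq (hφ n)]
    _ = (C : ℝ≥0∞) ^ q * (c n * ∫⁻ t, ‖g t‖ₑ ^ q ∂μ) := by
      rw [hmap n, lintegral_smul_measure, smul_eq_mul]
  have hsupp : support (fun t => ‖weightedCompSum A w φ g t‖ₑ ^ q) ⊆ ⋃ n, A n := by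
    intro t ht
    by_contra hnot
    simp [weightedCompSum_apply_of_notMem g hnot, hq] at ht
  calc ∫⁻ t, ‖weightedCompSum A w φ g t‖ₑ ^ q ∂μ
      = ∑ n, ∫⁻ t in A n, ‖weightedCompSum A w φ g t‖ₑ ^ q ∂μ := by
        rw [← setLIntegral_eq_of_support_subset hsupp, lintegral_iUnion hA hdisj, tsum_fintype]
    _ = ∑ n, ∫⁻ t in A n, ‖w n t • g (φ n t)‖ₑ ^ q ∂μ :=
        Finset.sum_congr rfl fun n _ => setLIntegral_congr_fun (hA n) fun t ht => by
          rw [weightedCompSum_apply_of_mem hdisj g ht]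
    _ ≤ ∑ n, (C : ℝ≥0∞) ^ q * (c n * ∫⁻ t, ‖g t‖ₑ ^ q ∂μ) := Finset.sum_le_sum fun n _ => hpiece n
    _ ≤ (C : ℝ≥0∞) ^ q * ∫⁻ t, ‖g t‖ₑ ^ q ∂μ := by
      rw [← Finset.mul_sum, ← Finset.sum_mul]
      gcongr
      exact mul_le_of_le_one_left (by positivity) hc

lemma eLpNorm_weightedCompSum_le (hA : ∀ n, MeasurableSet (A n))
    (hdisj : Pairwise (Disjoint on A)) {c : ι → ℝ≥0∞}
    (hmap : ∀ n, Measure.map (φ n) (μ.restrict (A n)) = c n • μ) (hc : ∑ n, c n ≤ 1)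
    (hφ : ∀ n, AEMeasurable (φ n) (μ.restrict (A n))) {C : ℝ≥0}
    (hw : ∀ n, ∀ᵐ t ∂μ.restrict (A n), ‖w n t‖ₑ ≤ C) {p : ℝ≥0∞} (hp0 : p ≠ 0) (hp : p ≠ ∞)
    {g : α → E} (hg : AEStronglyMeasurable g μ) :
    eLpNorm (weightedCompSum A w φ g) p μ ≤ C * eLpNorm g p μ := by
  have hq : 0 < p.toReal := toReal_pos hp0 hp
  rw [eLpNorm_eq_lintegral_rpow_enorm_toReal hp0 hp, eLpNorm_eq_lintegral_rpow_enorm_toReal hp0 hp]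
  calc (∫⁻ t, ‖weightedCompSum A w φ g t‖ₑ ^ p.toReal ∂μ) ^ (1 / p.toReal)
      ≤ ((C : ℝ≥0∞) ^ p.toReal * ∫⁻ t, ‖g t‖ₑ ^ p.toReal ∂μ) ^ (1 / p.toReal) := by
        gcongr
        exact lintegral_enorm_rpow_weightedCompSum_le hA hdisj hmap hc hφ hw hg hq
    _ = C * (∫⁻ t, ‖g t‖ₑ ^ p.toReal ∂μ) ^ (1 / p.toReal) := by
        rw [mul_rpow_of_nonneg _ _ (by positivity), ← rpow_mul, mul_one_div_cancel hq.ne', rpow_one]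

lemma exists_Lp_continuousLinearMap_weightedCompSum (hA : ∀ n, MeasurableSet (A n))
    (hdisj : Pairwise (Disjoint on A)) {c : ι → ℝ≥0∞}
    (hmap : ∀ n, Measure.map (φ n) (μ.restrict (A n)) = c n • μ) (hc : ∑ n, c n ≤ 1)
    (hφ : ∀ n, Measure.QuasiMeasurePreserving (φ n) (μ.restrict (A n)) μ)
    (hw_meas : ∀ n, AEStronglyMeasurable (w n) (μ.restrict (A n))) {C : ℝ≥0}
    (hw : ∀ n, ∀ᵐ t ∂μ.restrict (A n), ‖w n t‖ₑ ≤ C) {p : ℝ≥0∞} [Fact (1 ≤ p)] (hp : p ≠ ∞) :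
    ∃ S : Lp E p μ →L[𝕜] Lp E p μ, ‖S‖ ≤ C ∧ ∀ g, S g =ᵐ[μ] weightedCompSum A w φ g :=
  (weightedCompSum A w φ).exists_Lp_continuousLinearMap C
    (fun _ => aestronglyMeasurable_weightedCompSum hA hφ hw_meas)
    (fun _ _ => weightedCompSum_congr_ae hA hφ)
    (fun _ => eLpNorm_weightedCompSum_le hA hdisj hmap hc (fun n => (hφ n).aemeasurable) hw
      (zero_lt_one.trans_le Fact.out).ne' hp)

end WeightedCompSum

lemma Fin.sum_sub_castSucc {M : Type*} [AddCommGroup M] {N : ℕ} (x : Fin (N + 1) → M) :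
    ∑ n : Fin N, (x n.succ - x n.castSucc) = x (Fin.last N) - x 0 := by
  induction N with
  | zero => simp
  | succ N ih =>
    rw [Fin.sum_univ_castSucc]
    have := ih (x ∘ Fin.castSucc)
    simp only [comp_apply, Fin.castSucc_zero, ← Fin.succ_castSucc] at this
    rw [← Fin.succ_last, this]
    abel

lemma Real.map_affine_volume_restrict_preimage {a c : ℝ} (hc : c ≠ 0) {s : Set ℝ}
    (hs : MeasurableSet s) :
    Measure.map (fun t => a + c * t) (volume.restrict ((fun t => a + c * t) ⁻¹' s))
      = ENNReal.ofReal |c⁻¹| • volume.restrict s := by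
  have hmeas : Measurable fun t : ℝ => a + c * t := (measurable_const_mul c).const_add a
  have hvol : Measure.map (fun t => a + c * t) volume = ENNReal.ofReal |c⁻¹| • volume := by
    rw [show (fun t => a + c * t) = (a + ·) ∘ (c * ·) from rfl,
      ← Measure.map_map (measurable_const_add a) (measurable_const_mul c),
      Real.map_volume_mul_left hc, Measure.map_smul, map_add_left_eq_self]
  rw [← Measure.restrict_map hmeas hs, hvol, Measure.restrict_smul]

section Partition

variable {N : ℕ} {x : Fin (N + 1) → ℝ}

lemma Linv_eq (n : Fin N) :
    Linv x n = fun t => (x 0 - x n.castSucc * ((x (Fin.last N) - x 0) / (x n.succ - x n.castSucc)))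
      + (x (Fin.last N) - x 0) / (x n.succ - x n.castSucc) * t := by
  ext t; simp only [Linv]; ring

lemma measurableSet_subInt (n : Fin N) : MeasurableSet (subInt x n) := by
  unfold subInt; split_ifs
  exacts [measurableSet_Icc, measurableSet_Ioc]

lemma Ioc_subset_subInt (n : Fin N) : Ioc (x n.castSucc) (x n.succ) ⊆ subInt x n := by
  unfold subInt; split_ifs
  exacts [Ioc_subset_Icc_self, subset_rfl]

lemma subInt_subset_Icc (n : Fin N) : subInt x n ⊆ Icc (x n.castSucc) (x n.succ) := by
  unfold subInt; split_ifs
  exacts [subset_rfl, Ioc_subset_Icc_self]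

lemma subInt_subset_Ioc (n : Fin N) (hn : n.val ≠ 0) :
    subInt x n ⊆ Ioc (x n.castSucc) (x n.succ) := by
  simp [subInt, hn]

lemma pairwise_disjoint_subInt (hx : StrictMono x) : Pairwise (Disjoint on subInt x) := by
  refine (pairwise_disjoint_on _).2 fun m n hmn => ?_
  refine disjoint_left.2 fun t htm htn => ?_
  have hle : x m.succ ≤ x n.castSucc := hx.monotone (Fin.succ_le_castSucc_iff.2 hmn)
  have := (subInt_subset_Icc m htm).2
  have hn : n.val ≠ 0 := by have := Fin.lt_def.1 hmn; omega
  have := (subInt_subset_Ioc n hn htn).1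
  linarith

lemma Linv_castSucc (n : Fin N) : Linv x n (x n.castSucc) = x 0 := by simp [Linv]

lemma Linv_succ (hx : StrictMono x) (n : Fin N) : Linv x n (x n.succ) = x (Fin.last N) := by
  have : x n.succ - x n.castSucc ≠ 0 := (sub_pos.2 (hx n.castSucc_lt_succ)).ne'
  simp only [Linv]; field_simp; ring

lemma slope_Linv_pos (hx : StrictMono x) (hN : 0 < N) (n : Fin N) :
    0 < (x (Fin.last N) - x 0) / (x n.succ - x n.castSucc) :=
  div_pos (sub_pos.2 (hx (Fin.lt_def.2 hN))) (sub_pos.2 (hx n.castSucc_lt_succ))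

lemma strictMono_Linv (hx : StrictMono x) (hN : 0 < N) (n : Fin N) : StrictMono (Linv x n) := by
  rw [Linv_eq]
  exact (strictMono_mul_left_of_pos (slope_Linv_pos hx hN n)).const_add _

lemma subInt_eq_preimage_Linv (hx : StrictMono x) (hN : 0 < N) (n : Fin N) :
    subInt x n = Linv x n ⁻¹'
      (if n.val = 0 then Icc (x 0) (x (Fin.last N)) else Ioc (x 0) (x (Fin.last N))) := by
  let e := OrderEmbedding.ofStrictMono _ (strictMono_Linv hx hN n)
  have h0 : e (x n.castSucc) = x 0 := Linv_castSucc n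
  have h1 : e (x n.succ) = x (Fin.last N) := Linv_succ hx n
  rw [← h0, ← h1]
  unfold subInt; split_ifs
  exacts [(e.preimage_Icc ..).symm, (e.preimage_Ioc ..).symm]

lemma iUnion_subInt (hx : StrictMono x) (hN : 0 < N) :
    ⋃ n, subInt x n = Icc (x 0) (x (Fin.last N)) := by
  refine Subset.antisymm (iUnion_subset fun n => (subInt_subset_Icc n).trans
    (Icc_subset_Icc (hx.monotone (Fin.zero_le _)) (hx.monotone (Fin.le_last _)))) fun t ht => ?_
  obtain ⟨k, hk, hmin⟩ := (Finset.univ.filter fun i => t ≤ x i).exists_min_image id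
    ⟨Fin.last N, by simpa using ht.2⟩
  simp only [Finset.mem_filter, Finset.mem_univ, true_and, id] at hk hmin
  induction k using Fin.cases with
  | zero =>
    obtain rfl : t = x 0 := le_antisymm hk ht.1
    refine mem_iUnion.2 ⟨⟨0, hN⟩, ?_⟩
    simp only [subInt]
    exact ⟨le_rfl, hx.monotone (Fin.zero_le _)⟩
  | succ j =>
    refine mem_iUnion.2 ⟨j, Ioc_subset_subInt _ ⟨lt_of_not_ge fun hle => ?_, hk⟩⟩
    exact absurd (hmin _ hle) (not_le.2 j.castSucc_lt_succ)

lemma sum_ofReal_length_div_eq_one (hx : StrictMono x) (hN : 0 < N) :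
    ∑ n : Fin N, ENNReal.ofReal ((x n.succ - x n.castSucc) / (x (Fin.last N) - x 0)) = 1 := by
  have hI : 0 < x (Fin.last N) - x 0 := sub_pos.2 (hx (Fin.lt_def.2 hN))
  rw [← ENNReal.ofReal_sum_of_nonneg fun n _ =>
      (div_pos (sub_pos.2 (hx n.castSucc_lt_succ)) hI).le,
    ← Finset.sum_div, Fin.sum_sub_castSucc, div_self hI.ne', ENNReal.ofReal_one]

variable {μ : Measure ℝ}

lemma map_Linv_restrict_subInt (hx : StrictMono x) (hN : 0 < N)
    (hμ : μ = volume.restrict (Icc (x 0) (x (Fin.last N)))) (n : Fin N) :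
    Measure.map (Linv x n) (μ.restrict (subInt x n))
      = ENNReal.ofReal ((x n.succ - x n.castSucc) / (x (Fin.last N) - x 0)) • μ := by
  have hk := slope_Linv_pos hx hN n
  have hsub : subInt x n ⊆ Icc (x 0) (x (Fin.last N)) :=
    iUnion_subInt hx hN ▸ subset_iUnion (subInt x) n
  rw [hμ, Measure.restrict_restrict (measurableSet_subInt n), inter_eq_self_of_subset_left hsub,
    subInt_eq_preimage_Linv hx hN, Linv_eq,
    Real.map_affine_volume_restrict_preimage hk.ne' (by split_ifs <;> measurability),
    abs_of_pos (inv_pos.2 hk), inv_div]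
  split_ifs
  · rfl
  · rw [Measure.restrict_congr_set Ioc_ae_eq_Icc]

lemma quasiMeasurePreserving_Linv (hx : StrictMono x) (hN : 0 < N)
    (hμ : μ = volume.restrict (Icc (x 0) (x (Fin.last N)))) (n : Fin N) :
    Measure.QuasiMeasurePreserving (Linv x n) (μ.restrict (subInt x n)) μ :=
  ⟨(strictMono_Linv hx hN n).monotone.measurable, by
    rw [map_Linv_restrict_subInt hx hN hμ n]; exact Measure.smul_absolutelyContinuous⟩

lemma SelfRef.ae_eq_add_weightedCompSum (hx : StrictMono x) (hN : 0 < N)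
    (hμ : μ = volume.restrict (Icc (x 0) (x (Fin.last N)))) {α : Fin N → ℝ → ℝ} {f b h : ℝ → ℝ}
    (hself : SelfRef μ x α f b h) (hb : b =ᵐ[μ] 0) :
    h =ᵐ[μ] f + weightedCompSum (subInt x) (fun n t => α n (Linv x n t)) (Linv x) h := by
  have hcover : μ.restrict (⋃ n, subInt x n) = μ := by
    rw [iUnion_subInt hx hN, hμ, Measure.restrict_restrict measurableSet_Icc, inter_self]
  refine ae_mono hcover.ge ((ae_restrict_iUnion_iff _ _).2 fun n => ?_)
  filter_upwards [ae_restrict_mem (measurableSet_subInt n),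
    (ae_restrict_iff' (measurableSet_subInt n)).2 (hself n),
    (quasiMeasurePreserving_Linv hx hN hμ n).ae hb] with t ht hself hzero
  rw [hself, hzero, Pi.add_apply, Pi.zero_apply, sub_zero,
    weightedCompSum_apply_of_mem (pairwise_disjoint_subInt hx) _ ht, smul_eq_mul]

end Partition

lemma Lp.ae_enorm_le {α E : Type*} [MeasurableSpace α] {μ : Measure α} [NormedAddCommGroup E]
    (f : Lp E ∞ μ) : ∀ᵐ t ∂μ, ‖f t‖ₑ ≤ ‖f‖ₑ := by
  rw [Lp.enorm_def, eLpNorm_exponent_top]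
  exact ae_le_eLpNormEssSup

theorem exists_Lp_eq_add_of_selfRef {N : ℕ} (hN : 0 < N) {x : Fin (N + 1) → ℝ} (hx : StrictMono x)
    {μ : Measure ℝ} (hμ : μ = volume.restrict (Icc (x 0) (x (Fin.last N))))
    (α : Fin N → Lp ℝ ∞ μ) {C : ℝ≥0} (hα : ∀ n, ‖α n‖ ≤ C) {p : ℝ≥0∞} [Fact (1 ≤ p)]
    (hp : p ≠ ∞) :
    ∃ S : Lp ℝ p μ →L[ℝ] Lp ℝ p μ, ‖S‖ ≤ C ∧ ∀ f h : Lp ℝ p μ,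
      SelfRef μ x (fun n => ⇑(α n)) ⇑f ⇑(0 : Lp ℝ p μ) ⇑h → h = f + S h := by
  have hφ := quasiMeasurePreserving_Linv hx hN hμ
  obtain ⟨S, hSC, hS⟩ := exists_Lp_continuousLinearMap_weightedCompSum (E := ℝ)
    (w := fun n t => α n (Linv x n t)) measurableSet_subInt (pairwise_disjoint_subInt hx)
    (map_Linv_restrict_subInt hx hN hμ) (sum_ofReal_length_div_eq_one hx hN).le hφ
    (fun n => (Lp.aestronglyMeasurable (α n)).comp_quasiMeasurePreserving (hφ n))
    (fun n => ((hφ n).ae (Lp.ae_enorm_le (α n))).mono fun t ht => ht.trans (by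
      simpa [← ofReal_norm] using hα n)) hp
  refine ⟨S, hSC, fun f h hself => Lp.ext ?_⟩
  filter_upwards [hself.ae_eq_add_weightedCompSum hx hN hμ (Lp.coeFn_zero ℝ p μ),
    Lp.coeFn_add f (S h), hS h] with t h₁ h₂ h₃
  rw [h₁, h₂, Pi.add_apply, Pi.add_apply, h₃]

open RealInnerProductSpace in
/-- If `(f m)` is a Bessel sequence in `L²(I)`, then so is
`(f m *_T 0)`. -/
theorem partial_convolution_null_base_bessel
    (N : ℕ) (hN : 2 ≤ N) (x : Fin (N + 1) → ℝ) (hx : StrictMono x)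
    (μ : Measure ℝ) (hμ : μ = volume.restrict (Set.Icc (x 0) (x (Fin.last N))))
    (α : Fin N → Lp ℝ ∞ μ)
    (Λ : ℝ) (hΛdef : Λ = ⨆ n : Fin N, ‖α n‖) (hΛ : Λ < 1)
    (P₂ : Lp ℝ 2 μ → Lp ℝ 2 μ)
    (hP₂ : ∀ f : Lp ℝ 2 μ, SelfRef μ x (fun n => ⇑(α n)) ⇑f ⇑(0 : Lp ℝ 2 μ) ⇑(P₂ f))
    (f : ℕ → Lp ℝ 2 μ)
    (B : ℝ) (hB : 0 < B)
    (hBessel : ∀ g : Lp ℝ 2 μ, ∀ s : Finset ℕ, ∑ m ∈ s, |⟪g, f m⟫|^2 ≤ B * ‖g‖^2) :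
    ∃ B' : ℝ, 0 < B' ∧
      ∀ g : Lp ℝ 2 μ, ∀ s : Finset ℕ, ∑ m ∈ s, |⟪g, P₂ (f m)⟫|^2 ≤ B' * ‖g‖^2 := by
  have hα (n : Fin N) : ‖α n‖ ≤ Λ.toNNReal :=
    (hΛdef ▸ le_ciSup (Set.finite_range _).bddAbove n).trans (Real.le_coe_toNNReal Λ)
  obtain ⟨S, hSΛ, hS⟩ := exists_Lp_eq_add_of_selfRef (p := 2) (by omega) hx hμ α hα ofNat_ne_top
  have hS1 : ‖S‖ < 1 := hSΛ.trans_lt (by exact_mod_cast Real.toNNReal_lt_one.2 hΛ)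
  refine ⟨B * (1 - ‖S‖)⁻¹ ^ 2, by have := sub_pos.2 hS1; positivity, fun g s => ?_⟩
  simpa only [Real.norm_eq_abs] using sum_norm_inner_sq_le_of_eq_add_apply hS1
    (fun f => hS f _ (hP₂ f)) (by simpa only [Real.norm_eq_abs] using hBessel) hB.le g s
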